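/- arXiv:2202.07786 — 2 statements merged into one kernel-verified Lean document; each statement's English description precedes it below -/
import Mathlib

section
/- Bisimulations preserve saturation: if B is a bisimulation between Kripke structures X₁ and X₂ and (x,y) ∈ B, then x is m-saturated if and only if y is m-saturated. -/
/-- Modal formulas over a set `Φ` of atomic propositions. -/
inductive ModalFormula (Φ : Type*) : Type _ where
  | atom : Φ → ModalFormula Φ
  | top  : ModalFormula Φ
  | bot  : ModalFormula Φ
  | neg  : ModalFormula Φ → ModalFormula Φ
  | and  : ModalFormula Φ → ModalFormula Φ → ModalFormula Φ
  | or   : ModalFormula Φ → ModalFormula Φ → ModalFormula Φ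
  | box  : ModalFormula Φ → ModalFormula Φ

/-- `◇φ := ¬□¬φ`. -/
def ModalFormula.dia {Φ : Type*} (φ : ModalFormula Φ) : ModalFormula Φ :=
  .neg (.box (.neg φ))

/-- A Kripke structure on state set `X`: a transition relation and a valuation. -/
structure KripkeStructure (Φ X : Type*) where
  R : X → X → Prop
  v : X → Set Φ

/-- Satisfaction `x ⊨ φ`. -/
def Satisfies {Φ X : Type*} (M : KripkeStructure Φ X) : X → ModalFormula Φ → Prop
  | x, .atom p  => p ∈ M.v x
  | _, .top     => True
  | _, .bot     => False
  | x, .neg φ   => ¬ Satisfies M x φ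
  | x, .and φ ψ => Satisfies M x φ ∧ Satisfies M x ψ
  | x, .or φ ψ  => Satisfies M x φ ∨ Satisfies M x ψ
  | x, .box φ   => ∀ y, M.R x y → Satisfies M y φ

/-- `B` is a bisimulation between `M` and `N`. -/
def IsBisimulation {Φ X Y : Type*} (M : KripkeStructure Φ X) (N : KripkeStructure Φ Y)
    (B : X → Y → Prop) : Prop :=
  ∀ x y, B x y →
    M.v x = N.v y ∧
    (∀ x', M.R x x' → ∃ y', N.R y y' ∧ B x' y') ∧
    (∀ y', N.R y y' → ∃ x', M.R x x' ∧ B x' y')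

/-- `x ∼ y` : there is a bisimulation relating `x` and `y`. -/
def Bisimilar {Φ X Y : Type*} (M : KripkeStructure Φ X) (N : KripkeStructure Φ Y)
    (x : X) (y : Y) : Prop :=
  ∃ B : X → Y → Prop, IsBisimulation M N B ∧ B x y

/-- `x ≈ y` : logical equivalence. -/
def LogEquiv {Φ X Y : Type*} (M : KripkeStructure Φ X) (N : KripkeStructure Φ Y)
    (x : X) (y : Y) : Prop :=
  ∀ φ : ModalFormula Φ, Satisfies M x φ ↔ Satisfies N y φ

/-- A Kripke homomorphism: a map whose graph is a bisimulation. -/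
def IsKripkeHom {Φ X Y : Type*} (M : KripkeStructure Φ X) (N : KripkeStructure Φ Y)
    (f : X → Y) : Prop :=
  IsBisimulation M N (fun x y => y = f x)

/-- `x` is m-saturated: whenever every finite subset of `S` is satisfied at some
successor of `x`, some successor of `x` satisfies all of `S`. -/
def MSaturated {Φ X : Type*} (M : KripkeStructure Φ X) (x : X) : Prop :=
  ∀ S : Set (ModalFormula Φ),
    (∀ S₀ ⊆ S, S₀.Finite → ∃ y, M.R x y ∧ ∀ φ ∈ S₀, Satisfies M y φ) →
    ∃ y, M.R x y ∧ ∀ φ ∈ S, Satisfies M y φ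

/-- A Kripke structure is saturated if every state is m-saturated. -/
def Saturated {Φ X : Type*} (M : KripkeStructure Φ X) : Prop :=
  ∀ x : X, MSaturated M x


theorem bisim_logEquiv {Φ X Y : Type*} (M : KripkeStructure Φ X) (N : KripkeStructure Φ Y)
    (B : X → Y → Prop) (hB : IsBisimulation M N B) :
    ∀ φ : ModalFormula Φ, ∀ x y, B x y → (Satisfies M x φ ↔ Satisfies N y φ) := by
  intro φ
  induction φ with
  | atom p => intro x y h; have := (hB x y h).1; simp [Satisfies, this]
  | top => intro x y h; simp [Satisfies]
  | bot => intro x y h; simp [Satisfies]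
  | neg φ ih => intro x y h; simp [Satisfies, ih x y h]
  | and φ ψ ih1 ih2 => intro x y h; simp [Satisfies, ih1 x y h, ih2 x y h]
  | or φ ψ ih1 ih2 => intro x y h; simp [Satisfies, ih1 x y h, ih2 x y h]
  | box φ ih =>
    intro x y h
    obtain ⟨_, hf, hb⟩ := hB x y h
    constructor
    · intro hx y' hy'
      obtain ⟨x', hx', hB'⟩ := hb y' hy'
      exact (ih x' y' hB').mp (hx x' hx')
    · intro hy x' hx'
      obtain ⟨y', hy', hB'⟩ := hf x' hx'
      exact (ih x' y' hB').mpr (hy y' hy')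

theorem bisim_msat {Φ X Y : Type*} (M : KripkeStructure Φ X) (N : KripkeStructure Φ Y)
    (B : X → Y → Prop) (hB : IsBisimulation M N B)
    {x : X} {y : Y} (hxy : B x y) (hx : MSaturated M x) : MSaturated N y := by
  intro S hS
  obtain ⟨x₀, hx₀, hsat⟩ := hx S (by
    intro S₀ hsub hfin
    obtain ⟨y₀, hy₀, hsat⟩ := hS S₀ hsub hfin
    obtain ⟨x₀, hx₀, hB'⟩ := (hB x y hxy).2.2 y₀ hy₀
    exact ⟨x₀, hx₀, fun φ hφ => (bisim_logEquiv M N B hB φ x₀ y₀ hB').mpr (hsat φ hφ)⟩)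
  obtain ⟨y₀, hy₀, hB'⟩ := (hB x y hxy).2.1 x₀ hx₀
  exact ⟨y₀, hy₀, fun φ hφ => (bisim_logEquiv M N B hB φ x₀ y₀ hB').mp (hsat φ hφ)⟩

/-- Bisimulations preserve saturation. -/
theorem bisimulation_preserves_saturation {Φ X₁ X₂ : Type*}
    (M₁ : KripkeStructure Φ X₁) (M₂ : KripkeStructure Φ X₂)
    (B : X₁ → X₂ → Prop) (hB : IsBisimulation M₁ M₂ B)
    {x : X₁} {y : X₂} (hxy : B x y) :
    MSaturated M₁ x ↔ MSaturated M₂ y := by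
  constructor
  · exact bisim_msat M₁ M₂ B hB hxy
  · refine bisim_msat M₂ M₁ (fun b a => B a b) ?_ hxy
    intro b a h
    obtain ⟨h1, h2, h3⟩ := hB a b h
    exact ⟨h1.symm, h3, fun x' hx' => h2 x' hx'⟩
end

section
/- A Kripke structure X is saturated if and only if there exist a simple and saturated Kripke structure Y and a surjective Kripke homomorphism from X onto Y. -/
/-- A Kripke structure is simple if every surjective homomorphism out of it
is injective (it has no proper homomorphic image). -/
def Simple {Φ : Type u} {Y : Type v} (N : KripkeStructure Φ Y) : Prop :=
  ∀ (Z : Type v) (P : KripkeStructure Φ Z) (f : Y → Z),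
    IsKripkeHom N P f → Function.Surjective f → Function.Injective f

section Aux

universe u v

variable {Φ : Type u} {X : Type v} {Y Z : Type*}

theorem bisim_sat {M : KripkeStructure Φ X} {N : KripkeStructure Φ Y}
    {B : X → Y → Prop} (hB : IsBisimulation M N B) :
    ∀ (φ : ModalFormula Φ) (x : X) (y : Y), B x y →
      (Satisfies M x φ ↔ Satisfies N y φ) := by
  intro φ
  induction φ with
  | atom p => intro x y h; have := (hB x y h).1; simp only [Satisfies, this]
  | top => intro x y h; simp [Satisfies]
  | bot => intro x y h; simp [Satisfies]
  | neg φ ih => intro x y h; simp only [Satisfies]; exact not_congr (ih x y h)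
  | and φ ψ ih1 ih2 => intro x y h; simp only [Satisfies]; exact and_congr (ih1 x y h) (ih2 x y h)
  | or φ ψ ih1 ih2 => intro x y h; simp only [Satisfies]; exact or_congr (ih1 x y h) (ih2 x y h)
  | box φ ih =>
    intro x y h
    obtain ⟨_, hf, hb⟩ := hB x y h
    constructor
    · intro hx y' hy'
      obtain ⟨x', hx', hB'⟩ := hb y' hy'
      exact (ih x' y' hB').1 (hx x' hx')
    · intro hy x' hx'
      obtain ⟨y', hy', hB'⟩ := hf x' hx'
      exact (ih x' y' hB').2 (hy y' hy')

theorem hom_logEquiv {M : KripkeStructure Φ X} {N : KripkeStructure Φ Y} {f : X → Y}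
    (hf : IsKripkeHom M N f) (x : X) : LogEquiv M N x (f x) :=
  fun φ => bisim_sat hf φ x (f x) rfl

/-- Conjunction of a list of formulas. -/
def listConj : List (ModalFormula Φ) → ModalFormula Φ
  | [] => .top
  | φ :: L => .and φ (listConj L)

theorem sat_listConj (M : KripkeStructure Φ X) (x : X) :
    ∀ L : List (ModalFormula Φ), Satisfies M x (listConj L) ↔ ∀ φ ∈ L, Satisfies M x φ := by
  intro L
  induction L with
  | nil => simp [listConj, Satisfies]
  | cons φ L ih => simp [listConj, Satisfies, ih]

/-- Hennessy–Milner forth property for saturated structures. -/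
theorem saturated_forth {M : KripkeStructure Φ X} (hM : Saturated M) {x y y' : X}
    (hxy : LogEquiv M M x y) (hR : M.R y y') :
    ∃ x', M.R x x' ∧ LogEquiv M M x' y' := by
  obtain ⟨x', hx', hs⟩ := hM x {φ | Satisfies M y' φ} (by
    intro S₀ hsub hfin
    set L := hfin.toFinset.toList with hL
    have hmem : ∀ φ, φ ∈ L ↔ φ ∈ S₀ := by
      intro φ; rw [hL, Finset.mem_toList, Set.Finite.mem_toFinset]
    have hy' : Satisfies M y' (listConj L) :=
      (sat_listConj M y' L).2 (fun φ hφ => hsub ((hmem φ).1 hφ))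
    have hdy : Satisfies M y ((listConj L).dia) := by
      intro h
      exact h y' hR hy'
    have hdx : Satisfies M x ((listConj L).dia) := (hxy _).2 hdy
    simp only [ModalFormula.dia, Satisfies, not_forall] at hdx
    obtain ⟨z, hz, hsz⟩ := hdx
    refine ⟨z, hz, fun φ hφ => ?_⟩
    exact (sat_listConj M z L).1 (not_not.1 hsz) φ ((hmem φ).2 hφ))
  refine ⟨x', hx', fun φ => ⟨fun h => ?_, fun h => hs φ h⟩⟩
  by_contra hc
  exact hs (.neg φ) hc h

/-- Saturation transfers backwards along a homomorphism. -/
theorem saturated_of_hom {M : KripkeStructure Φ X} {N : KripkeStructure Φ Y} {f : X → Y}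
    (hf : IsKripkeHom M N f) (hN : Saturated N) : Saturated M := by
  intro x S hS
  obtain ⟨_, hforth, hback⟩ := hf x (f x) rfl
  obtain ⟨y', hy', hsy⟩ := hN (f x) S (by
    intro S₀ hsub hfin
    obtain ⟨x', hx', hsx⟩ := hS S₀ hsub hfin
    obtain ⟨z, hz, hz'⟩ := hforth x' hx'
    refine ⟨z, hz, fun φ hφ => ?_⟩
    rw [hz']
    exact (hom_logEquiv hf x' φ).1 (hsx φ hφ))
  obtain ⟨x', hx', hfx'⟩ := hback y' hy'
  refine ⟨x', hx', fun φ hφ => ?_⟩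
  exact (hom_logEquiv hf x' φ).2 (hfx' ▸ hsy φ hφ)

/-- Logical equivalence as a setoid. -/
def logSetoid (M : KripkeStructure Φ X) : Setoid X :=
  ⟨fun x y => LogEquiv M M x y,
   ⟨fun _ _ => Iff.rfl, fun h φ => (h φ).symm, fun h1 h2 φ => (h1 φ).trans (h2 φ)⟩⟩

/-- The quotient structure. -/
def quotStruct (M : KripkeStructure Φ X) : KripkeStructure Φ (Quotient (logSetoid M)) where
  R a b := ∃ x y, M.R x y ∧ Quotient.mk (logSetoid M) x = a ∧ Quotient.mk (logSetoid M) y = b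
  v := Quotient.lift M.v (by
    intro x y h
    ext p
    exact h (.atom p))

theorem quot_hom {M : KripkeStructure Φ X} (hM : Saturated M) :
    IsKripkeHom M (quotStruct M) (Quotient.mk (logSetoid M)) := by
  intro x a ha
  subst ha
  refine ⟨rfl, fun x' hx' => ⟨Quotient.mk (logSetoid M) x', ⟨x, x', hx', rfl, rfl⟩, rfl⟩, ?_⟩
  rintro b ⟨x₀, y₀, hR, h1, h2⟩
  have hx₀x : LogEquiv M M x x₀ := @Setoid.symm X (logSetoid M) _ _ (Quotient.exact h1)
  obtain ⟨x', hx', hlog⟩ := saturated_forth hM hx₀x hR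
  exact ⟨x', hx', by rw [← h2]; exact (Quotient.sound hlog).symm⟩

end Aux

/-- A Kripke structure is saturated iff it has a simple and saturated
homomorphic image. -/
theorem saturated_iff_simple_saturated_image {Φ : Type u} {X : Type v}
    (M : KripkeStructure Φ X) :
    Saturated M ↔
      ∃ (Y : Type v) (N : KripkeStructure Φ Y) (f : X → Y),
        Simple N ∧ Saturated N ∧ IsKripkeHom M N f ∧ Function.Surjective f := by
  constructor
  · intro hM
    refine ⟨Quotient (logSetoid M), quotStruct M, Quotient.mk (logSetoid M), ?_, ?_, quot_hom hM,
      Quotient.mk''_surjective⟩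
    · -- Simple
      intro Z P g hg hsurj a b hab
      induction a using Quotient.inductionOn with | h x =>
      induction b using Quotient.inductionOn with | h y =>
      apply Quotient.sound
      show LogEquiv M M x y
      intro φ
      calc Satisfies M x φ ↔ Satisfies (quotStruct M) (Quotient.mk (logSetoid M) x) φ :=
             hom_logEquiv (quot_hom hM) x φ
        _ ↔ Satisfies P (g (Quotient.mk (logSetoid M) x)) φ := hom_logEquiv hg _ φ
        _ ↔ Satisfies P (g (Quotient.mk (logSetoid M) y)) φ := by rw [hab]
        _ ↔ Satisfies (quotStruct M) (Quotient.mk (logSetoid M) y) φ := (hom_logEquiv hg _ φ).symm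
        _ ↔ Satisfies M y φ := (hom_logEquiv (quot_hom hM) y φ).symm
    · -- Saturated
      intro a S hS
      induction a using Quotient.inductionOn with | h x =>
      obtain ⟨_, hforth, hback⟩ := quot_hom hM x (Quotient.mk (logSetoid M) x) rfl
      obtain ⟨x', hx', hsx⟩ := hM x S (by
        intro S₀ hsub hfin
        obtain ⟨b, hb, hsb⟩ := hS S₀ hsub hfin
        obtain ⟨x'', hx'', hbx⟩ := hback b hb
        refine ⟨x'', hx'', fun φ hφ => ?_⟩
        exact (hom_logEquiv (quot_hom hM) x'' φ).2 (hbx ▸ hsb φ hφ))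
      obtain ⟨b, hb, hb'⟩ := hforth x' hx'
      refine ⟨b, hb, fun φ hφ => ?_⟩
      rw [hb']
      exact (hom_logEquiv (quot_hom hM) x' φ).1 (hsx φ hφ)
  · rintro ⟨Y, N, f, _, hN, hf, _⟩
    exact saturated_of_hom hf hN
end
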